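/- Let A ⊆ {0,1}^d be a set of cells, let E be the set of extreme points of P_d, and let S₁ = {r ∈ E : r_α = 0 for all α ∈ A}. If S₁ = ∅, or if there exists a cell α ∉ A such that r_α = 0 for every r ∈ S₁, then there is no d-dimensional binary probability table q with uniform margins satisfying q_α = 0 for all α ∈ A and q_α > 0 for all α ∉ A. -/

import Mathlib

/-- The set of `d`-dimensional binary probability tables with uniform margins. -/
def uniformMarginTables (d : ℕ) : Set ((Fin d → Fin 2) → ℝ) :=
  {p | (∀ α, 0 ≤ p α) ∧ (∑ α, p α = 1) ∧
    ∀ i : Fin d,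
      ∑ α ∈ Finset.univ.filter (fun α : Fin d → Fin 2 => α i = 0), p α = 1 / 2}

lemma uniformMarginTables_convex (d : ℕ) : Convex ℝ (uniformMarginTables d) := by
  rintro p ⟨hp0, hp1, hpm⟩ q ⟨hq0, hq1, hqm⟩ a b ha hb hab
  refine ⟨fun α => add_nonneg (mul_nonneg ha (hp0 α)) (mul_nonneg hb (hq0 α)), ?_, fun i => ?_⟩
  · simp only [Pi.add_apply, Pi.smul_apply, smul_eq_mul]
    rw [Finset.sum_add_distrib, ← Finset.mul_sum, ← Finset.mul_sum, hp1, hq1]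
    linarith
  · simp only [Pi.add_apply, Pi.smul_apply, smul_eq_mul]
    rw [Finset.sum_add_distrib, ← Finset.mul_sum, ← Finset.mul_sum, hpm i, hqm i]
    linarith

lemma uniformMarginTables_isCompact (d : ℕ) : IsCompact (uniformMarginTables d) := by
  have hsub : uniformMarginTables d ⊆ Set.pi Set.univ (fun _ : Fin d → Fin 2 => Set.Icc (0:ℝ) 1) := by
    rintro p ⟨hp0, hp1, -⟩ α -
    refine ⟨hp0 α, ?_⟩
    calc p α ≤ ∑ β, p β := Finset.single_le_sum (fun β _ => hp0 β) (Finset.mem_univ α)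
    _ = 1 := hp1
  have hclosed : IsClosed (uniformMarginTables d) := by
    have h1 : IsClosed {p : (Fin d → Fin 2) → ℝ | ∀ α, 0 ≤ p α} := by
      have : {p : (Fin d → Fin 2) → ℝ | ∀ α, 0 ≤ p α} = ⋂ α, {p | 0 ≤ p α} := by
        ext; simp
      rw [this]
      exact isClosed_iInter fun α => isClosed_le continuous_const (continuous_apply α)
    have h2 : IsClosed {p : (Fin d → Fin 2) → ℝ | ∑ α, p α = 1} :=
      isClosed_eq (by continuity) continuous_const
    have h3 : IsClosed {p : (Fin d → Fin 2) → ℝ | ∀ i : Fin d,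
        ∑ α ∈ Finset.univ.filter (fun α : Fin d → Fin 2 => α i = 0), p α = 1 / 2} := by
      have : {p : (Fin d → Fin 2) → ℝ | ∀ i : Fin d,
          ∑ α ∈ Finset.univ.filter (fun α : Fin d → Fin 2 => α i = 0), p α = 1 / 2} =
          ⋂ i, {p | ∑ α ∈ Finset.univ.filter (fun α : Fin d → Fin 2 => α i = 0), p α = 1 / 2} := by
        ext; simp
      rw [this]
      exact isClosed_iInter fun i => isClosed_eq (by continuity) continuous_const
    have : uniformMarginTables d = {p | ∀ α, 0 ≤ p α} ∩ ({p | ∑ α, p α = 1} ∩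
        {p : (Fin d → Fin 2) → ℝ | ∀ i : Fin d,
          ∑ α ∈ Finset.univ.filter (fun α : Fin d → Fin 2 => α i = 0), p α = 1 / 2}) := by
      ext p; exact ⟨fun ⟨a, b, c⟩ => ⟨a, b, c⟩, fun ⟨a, b, c⟩ => ⟨a, b, c⟩⟩
    rw [this]
    exact h1.inter (h2.inter h3)
  exact IsCompact.of_isClosed_subset (isCompact_univ_pi fun _ => isCompact_Icc) hclosed hsub

/-- Let `S₁` be the set of extreme points of `P_d` vanishing on `A`.
If `S₁ = ∅`, or some cell outside `A` is annihilated by every element of `S₁`, then no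
table with uniform margins vanishes exactly on `A`. -/
theorem stmt_4 (d : ℕ) (A : Set (Fin d → Fin 2))
    (E : Finset ((Fin d → Fin 2) → ℝ))
    (hE : (E : Set ((Fin d → Fin 2) → ℝ)) = Set.extremePoints ℝ (uniformMarginTables d))
    (S₁ : Finset ((Fin d → Fin 2) → ℝ))
    (hS₁ : ∀ r, r ∈ S₁ ↔ r ∈ E ∧ ∀ α ∈ A, r α = 0)
    (hbad : S₁ = ∅ ∨ ∃ α ∉ A, ∀ r ∈ S₁, r α = 0) :
    ¬ ∃ q ∈ uniformMarginTables d, (∀ α ∈ A, q α = 0) ∧ ∀ α ∉ A, 0 < q α := by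
  rintro ⟨q, hq, hqA, hqpos⟩
  -- q is in the convex hull of E
  have hhull : uniformMarginTables d = convexHull ℝ (E : Set ((Fin d → Fin 2) → ℝ)) := by
    have h := closure_convexHull_extremePoints (uniformMarginTables_isCompact d)
      (uniformMarginTables_convex d)
    rw [← hE, (E.finite_toSet.isClosed_convexHull ℝ).closure_eq] at h
    exact h.symm
  have hqhull : q ∈ convexHull ℝ (E : Set ((Fin d → Fin 2) → ℝ)) := hhull ▸ hq
  rw [Finset.convexHull_eq] at hqhull
  obtain ⟨w, hw0, hw1, hwq⟩ := hqhull
  rw [Finset.centerMass_eq_of_sum_1 _ _ hw1] at hwq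
  -- each extreme point is in the set, so nonnegative
  have hEmem : ∀ r ∈ E, r ∈ uniformMarginTables d := fun r hr =>
    extremePoints_subset (hE ▸ Finset.mem_coe.mpr hr)
  -- q α = ∑ r ∈ E, w r * r α
  have hqval : ∀ α, q α = ∑ r ∈ E, w r * r α := by
    intro α
    rw [← hwq]
    simp [Finset.sum_apply]
  -- any r ∈ E with w r ≠ 0 lies in S₁
  have hsupp : ∀ r ∈ E, w r ≠ 0 → r ∈ S₁ := by
    intro r hr hwr
    rw [hS₁]
    refine ⟨hr, fun α hα => ?_⟩
    have h0 : ∑ s ∈ E, w s * s α = 0 := by rw [← hqval α, hqA α hα]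
    have hterm : ∀ s ∈ E, 0 ≤ w s * s α :=
      fun s hs => mul_nonneg (hw0 s hs) ((hEmem s hs).1 α)
    have := (Finset.sum_eq_zero_iff_of_nonneg hterm).mp h0 r hr
    rcases mul_eq_zero.mp this with h | h
    · exact absurd h hwr
    · exact h
  rcases hbad with hS | ⟨α, hαA, hα0⟩
  · -- all weights zero, contradicting sum = 1
    have : ∑ r ∈ E, w r = 0 := by
      apply Finset.sum_eq_zero
      intro r hr
      by_contra h
      have := hsupp r hr h
      rw [hS] at this
      exact absurd this (Finset.notMem_empty r)
    rw [hw1] at this; norm_num at this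
  · have : q α = 0 := by
      rw [hqval α]
      apply Finset.sum_eq_zero
      intro r hr
      by_cases h : w r = 0
      · rw [h, zero_mul]
      · rw [hα0 r (hsupp r hr h), mul_zero]
    exact absurd this (ne_of_gt (hqpos α hαA))
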